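/- Let Λ ⊆ ℂ be non-degenerate (i.e., the field K_Λ generated over ℚ by the difference set Λ − Λ and its complex conjugate is not contained in ℝ) and suppose that for every finite subset F of K_Λ there is a non-singular affine transformation Ψ of the plane with Ψ(F) ⊆ Λ. Then for m ≥ 3 there exists an affinely regular m-gon with all vertices in Λ if and only if the maximal real subfield k_m = Q(ζ_m + ζ_m^{-1}) of the m-th cyclotomic field is contained in k_Λ := K_Λ ∩ ℝ. -/

import Mathlib

open Pointwise

/-- `ζ_m = e^{2πi/m}`, a primitive `m`-th root of unity in `ℂ`. -/
noncomputable def zeta (m : ℕ) : ℂ := Complex.exp (2 * Real.pi * Complex.I / m)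

/-- The maximal real subfield `k_m = ℚ(ζ_m + ζ_m⁻¹)` of the `m`-th cyclotomic field. -/
noncomputable def realCyclField (m : ℕ) : IntermediateField ℚ ℂ :=
  IntermediateField.adjoin ℚ {zeta m + (zeta m)⁻¹}

/-- `K_Λ = ℚ((Λ−Λ) ∪ conj(Λ−Λ))`, as a subfield of `ℂ`. -/
noncomputable def KL (Λ : Set ℂ) : IntermediateField ℚ ℂ :=
  IntermediateField.adjoin ℚ ((Λ - Λ) ∪ (starRingEnd ℂ) '' (Λ - Λ))

/-- `k_Λ = K_Λ ∩ ℝ`, as a subset of `ℂ`. -/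
noncomputable def kL (Λ : Set ℂ) : Set ℂ := {z : ℂ | z ∈ KL Λ ∧ z.im = 0}

/-- `Ψ : ℂ → ℂ` is a non-singular affine transformation of the plane. -/
def IsNSAffine (Ψ : ℂ → ℂ) : Prop :=
  ∃ (A : ℂ →ₗ[ℝ] ℂ) (t : ℂ), Function.Bijective A ∧ ∀ z : ℂ, Ψ z = A z + t

/-- There is an affinely regular `m`-gon with all vertices in `Λ`, i.e. a non-singular
affine image of the regular `m`-gon with vertices `1, ζ_m, …, ζ_m^{m-1}` lying in `Λ`. -/
def HasAffRegularGon (m : ℕ) (Λ : Set ℂ) : Prop :=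
  ∃ Ψ : ℂ → ℂ, IsNSAffine Ψ ∧ ∀ j : Fin m, Ψ ((zeta m) ^ (j : ℕ)) ∈ Λ

/-!
Write `ζ = ζ_m`, so that `ζ + ζ⁻¹ = 2 Re ζ` is real and `k_m = ℚ(2 Re ζ)`; hence `k_m ⊆ k_Λ`
just means `2 Re ζ ∈ K_Λ`.

If a non-singular affine `Ψ` maps every `ζʲ` into `Λ`, apply it to
`ζ³ - 1 = (2 Re ζ + 1)(ζ² - ζ)`: its linear part is `ℝ`-linear, so `2 Re ζ + 1` is a quotient
of two differences of points of `Λ`, and lies in `K_Λ`.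

Conversely, pick a non-real `w ∈ K_Λ` and the `ℝ`-linear bijection `Φ` with `Φ 1 = 1`,
`Φ ζ = Re ζ + w`. Since `ζⁿ⁺² = 2 Re ζ · ζⁿ⁺¹ - ζⁿ`, all `Φ ζⁿ` lie in `K_Λ`, and property (Aff)
moves these finitely many points into `Λ`.
-/

open Complex

lemma zeta_eq_exp (m : ℕ) : zeta m = exp ((2 * Real.pi / m : ℝ) * I) := by
  rw [zeta]; push_cast; ring_nf

lemma isPrimitiveRoot_zeta {m : ℕ} (hm : m ≠ 0) : IsPrimitiveRoot (zeta m) m :=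
  isPrimitiveRoot_exp m hm

lemma norm_zeta (m : ℕ) : ‖zeta m‖ = 1 := by
  rw [zeta_eq_exp, norm_exp_ofReal_mul_I]

lemma pow_add_two_eq_of_norm_eq_one {z : ℂ} (hz : ‖z‖ = 1) (n : ℕ) :
    z ^ (n + 2) = (2 * z.re : ℝ) * z ^ (n + 1) - z ^ n := by
  have hz0 : z ≠ 0 := norm_ne_zero_iff.mp (by simp [hz])
  rw [← add_conj, ← inv_eq_conj hz]
  field_simp
  ring

lemma pow_three_sub_one_eq_of_norm_eq_one {z : ℂ} (hz : ‖z‖ = 1) :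
    z ^ 3 - z ^ 0 = (2 * z.re + 1 : ℝ) * (z ^ 2 - z ^ 1) := by
  have hz0 : z ≠ 0 := norm_ne_zero_iff.mp (by simp [hz])
  rw [ofReal_add, ofReal_one, ← add_conj, ← inv_eq_conj hz]
  field_simp
  ring

lemma zeta_im_ne_zero {m : ℕ} (hm : 3 ≤ m) : (zeta m).im ≠ 0 := by
  rw [zeta_eq_exp, exp_ofReal_mul_I_im]
  have hm' : (3 : ℝ) ≤ m := by exact_mod_cast hm
  refine (Real.sin_pos_of_pos_of_lt_pi (by positivity) ?_).ne'
  rw [div_lt_iff₀ (by positivity)]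
  nlinarith [Real.pi_pos]

lemma LinearMap.map_ofReal_mul (A : ℂ →ₗ[ℝ] ℂ) (r : ℝ) (z : ℂ) : A (r * z) = r * A z := by
  rw [← real_smul, map_smul, real_smul]

namespace IsNSAffine

variable {Ψ : ℂ → ℂ}

lemma injective (hΨ : IsNSAffine Ψ) : Function.Injective Ψ := by
  obtain ⟨A, t, hA, hΨ⟩ := hΨ
  intro a b h
  simp only [hΨ, add_left_inj] at h
  exact hA.1 h

lemma map_sub_eq_ofReal_mul (hΨ : IsNSAffine Ψ) (r : ℝ) {a b c d : ℂ}
    (h : a - b = r * (c - d)) : Ψ a - Ψ b = r * (Ψ c - Ψ d) := by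
  obtain ⟨A, t, -, hΨ⟩ := hΨ
  simp only [hΨ, add_sub_add_right_eq_sub, ← map_sub, h, A.map_ofReal_mul]

lemma comp_linearMap (hΨ : IsNSAffine Ψ) {Φ : ℂ →ₗ[ℝ] ℂ} (hΦ : Function.Bijective Φ) :
    IsNSAffine (Ψ ∘ Φ) := by
  obtain ⟨A, t, hA, hΨ⟩ := hΨ
  exact ⟨A ∘ₗ Φ, t, hA.comp hΦ, fun z => hΨ (Φ z)⟩

end IsNSAffine

lemma sub_mem_KL {Λ : Set ℂ} {a b : ℂ} (ha : a ∈ Λ) (hb : b ∈ Λ) : a - b ∈ KL Λ :=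
  IntermediateField.subset_adjoin _ _ (Or.inl (Set.sub_mem_sub ha hb))

lemma mem_KL_of_sub_eq_mul_sub {Λ : Set ℂ} {r a b c d : ℂ} (ha : a ∈ Λ) (hb : b ∈ Λ)
    (hc : c ∈ Λ) (hd : d ∈ Λ) (hcd : c ≠ d) (h : a - b = r * (c - d)) : r ∈ KL Λ := by
  rw [eq_div_of_mul_eq (sub_ne_zero.mpr hcd) h.symm]
  exact div_mem (sub_mem_KL ha hb) (sub_mem_KL hc hd)

lemma mem_of_two_step_recurrence {R S : Type*} [Ring R] [SetLike S R] [SubringClass S R]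
    {s : S} {c : R} {u : ℕ → R} (hc : c ∈ s) (h0 : u 0 ∈ s) (h1 : u 1 ∈ s)
    (hu : ∀ n, u (n + 2) = c * u (n + 1) - u n) (n : ℕ) : u n ∈ s := by
  induction n using Nat.twoStepInduction with
  | zero => exact h0
  | one => exact h1
  | more n ihn ihn1 => rw [hu]; exact sub_mem (mul_mem hc ihn1) ihn

noncomputable def reAddImSMul (v : ℂ) : ℂ →ₗ[ℝ] ℂ :=
  reLm.smulRight 1 + imLm.smulRight v

lemma reAddImSMul_apply (v z : ℂ) : reAddImSMul v z = z.re + z.im • v := by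
  simp [reAddImSMul, real_smul]

lemma reAddImSMul_bijective {v : ℂ} (hv : v.im ≠ 0) : Function.Bijective (reAddImSMul v) := by
  have hinj : Function.Injective (reAddImSMul v) := by
    refine (injective_iff_map_eq_zero _).mpr fun z hz => ?_
    rw [reAddImSMul_apply] at hz
    have him : z.im = 0 := by
      simpa [hv] using congrArg im hz
    have hre : z.re = 0 := by
      simpa [him] using congrArg re hz
    exact Complex.ext hre him
  exact ⟨hinj, LinearMap.injective_iff_surjective.mp hinj⟩

lemma subset_kL_iff_mem_KL {Λ : Set ℂ} {z : ℂ} (hz : z.im = 0) :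
    (IntermediateField.adjoin ℚ {z} : Set ℂ) ⊆ kL Λ ↔ z ∈ KL Λ := by
  refine ⟨fun h => (h (IntermediateField.mem_adjoin_simple_self ℚ z)).1, fun h => ?_⟩
  have hle : IntermediateField.adjoin ℚ {z} ≤ KL Λ ⊓ ofRealHom.toRatAlgHom.fieldRange := by
    rw [IntermediateField.adjoin_simple_le_iff]
    exact ⟨h, z.re, Complex.ext (by simp) (by simp [hz])⟩
  intro x hx
  obtain ⟨hxK, r, rfl⟩ := hle hx
  exact ⟨hxK, ofReal_im r⟩

lemma HasAffRegularGon.two_mul_re_zeta_mem_KL {m : ℕ} {Λ : Set ℂ} (hm : 1 < m)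
    (h : HasAffRegularGon m Λ) : ((2 * (zeta m).re : ℝ) : ℂ) ∈ KL Λ := by
  obtain ⟨Ψ, hΨ, hvert⟩ := h
  have hζ := isPrimitiveRoot_zeta (m := m) (by omega)
  have hΛ (n : ℕ) : Ψ (zeta m ^ n) ∈ Λ := by
    rw [pow_eq_pow_mod n hζ.pow_eq_one]
    exact hvert ⟨n % m, Nat.mod_lt n (by omega)⟩
  have hne : Ψ (zeta m ^ 2) ≠ Ψ (zeta m ^ 1) := by
    refine hΨ.injective.ne fun h => hζ.ne_one hm ?_
    simpa [pow_two, hζ.ne_zero (by omega)] using h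
  have hc1 := mem_KL_of_sub_eq_mul_sub (hΛ 3) (hΛ 0) (hΛ 2) (hΛ 1) hne
    (hΨ.map_sub_eq_ofReal_mul _ (pow_three_sub_one_eq_of_norm_eq_one (norm_zeta m)))
  simpa using sub_mem hc1 (one_mem (KL Λ))

lemma hasAffRegularGon_of_two_mul_re_zeta_mem_KL {m : ℕ} {Λ : Set ℂ} (hm : 3 ≤ m)
    (hnd : ∃ z ∈ KL Λ, z.im ≠ 0)
    (haff : ∀ F : Finset ℂ, (F : Set ℂ) ⊆ (KL Λ : Set ℂ) →
      ∃ Ψ : ℂ → ℂ, IsNSAffine Ψ ∧ Ψ '' (F : Set ℂ) ⊆ Λ)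
    (hc : ((2 * (zeta m).re : ℝ) : ℂ) ∈ KL Λ) : HasAffRegularGon m Λ := by
  obtain ⟨w, hw, hwim⟩ := hnd
  have hζim := zeta_im_ne_zero hm
  set Φ := reAddImSMul ((zeta m).im⁻¹ • w)
  have hΦ : Function.Bijective Φ :=
    reAddImSMul_bijective (by simpa [smul_im] using ⟨hζim, hwim⟩)
  have hre : ((zeta m).re : ℂ) ∈ KL Λ := by
    simpa using div_mem hc (ofNat_mem (KL Λ) 2)
  -- `Φ 1 = 1`, `Φ ζ = Re ζ + w`, and `Φ` preserves the recurrence `ζⁿ⁺² = 2 Re ζ · ζⁿ⁺¹ - ζⁿ`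
  have hΦKL : ∀ n : ℕ, Φ (zeta m ^ n) ∈ KL Λ := by
    refine mem_of_two_step_recurrence hc ?_ ?_ fun n => ?_
    · simp [Φ, reAddImSMul_apply]
    · simpa [Φ, reAddImSMul_apply, smul_smul, hζim] using add_mem hre hw
    · rw [pow_add_two_eq_of_norm_eq_one (norm_zeta m), map_sub, Φ.map_ofReal_mul]
  obtain ⟨Ψ, hΨ, himg⟩ := haff ((Finset.range m).image fun n => Φ (zeta m ^ n)) (by
    simpa [Set.subset_def] using fun n _ => hΦKL n)
  exact ⟨Ψ ∘ Φ, hΨ.comp_linearMap hΦ, fun j => himg ⟨_, Finset.mem_coe.mpr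
    (Finset.mem_image_of_mem _ (Finset.mem_range.mpr j.isLt)), rfl⟩⟩

/-- Let `Λ ⊆ ℂ` be non-degenerate (`K_Λ ⊄ ℝ`) and satisfy property (Aff). Then for `m ≥ 3`
there is an affinely regular `m`-gon in `Λ` iff `k_m ⊆ k_Λ`. -/
theorem affRegularGon_iff (Λ : Set ℂ)
    (hnd : ∃ z ∈ KL Λ, z.im ≠ 0)
    (haff : ∀ F : Finset ℂ, (F : Set ℂ) ⊆ (KL Λ : Set ℂ) →
      ∃ Ψ : ℂ → ℂ, IsNSAffine Ψ ∧ Ψ '' (F : Set ℂ) ⊆ Λ)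
    (m : ℕ) (hm : 3 ≤ m) :
    HasAffRegularGon m Λ ↔ (realCyclField m : Set ℂ) ⊆ kL Λ := by
  rw [realCyclField, inv_eq_conj (norm_zeta m), add_conj, subset_kL_iff_mem_KL (ofReal_im _)]
  exact ⟨HasAffRegularGon.two_mul_re_zeta_mem_KL (by omega),
    hasAffRegularGon_of_two_mul_re_zeta_mem_KL hm hnd haff⟩
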